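/- arXiv:cs/0502005 — 2 statements merged into one kernel-verified Lean document; each statement's English description precedes it below -/
import Mathlib

section
/- For a finite structure A and a strict Σ_{t,1}-sentence φ = ∃x₁…∃x_k ∀y₁ ∃y₂ … ∀y_{t−1} ψ (t even, ψ quantifier-free in conjunctive normal form ⋀_i ⋁_j λ_{ij}, each literal containing at most one of the x-variables), define the propositional formula α := χ⁺ ∧ ⋀_{b₁∈A} ⋁_{b₂∈A} … ⋀_{b_{t−1}∈A} ⋀_i ⋁_j ξ^∨(A, λ_{ij}, b₁,…,b_{t−1}) over variables X_{i,a} (1 ≤ i ≤ k, a ∈ A), where χ⁺ forces functionality for weight-k assignments and ξ^∨(A, λ, b̄) = ⋁_{a: A ⊨ λ(a, b̄)} X_{i,a} when λ contains x_i (and is the constant corresponding to the truth value of λ(b̄) if λ contains no x-variable). Then A ⊨ φ if and only if α is k-satisfiable. -/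
/-- Alternating block of single quantifiers over M: `AltQ M n b P` is
∀a₁∃a₂∀a₃… (n quantifiers, starting with ∀ if b = true and with ∃ if b = false)
applied to the predicate P on the list of chosen elements. Equally, it is the
semantics of the corresponding alternation of big conjunctions (⋀_{a∈M}) and big
disjunctions (⋁_{a∈M}). -/
def AltQ (M : Type*) : ℕ → Bool → (List M → Prop) → Prop
  | 0, _, P => P []
  | n + 1, true, P => ∀ a : M, AltQ M n false (fun l => P (a :: l))
  | n + 1, false, P => ∃ a : M, AltQ M n true (fun l => P (a :: l))

/-- A literal of a strict formula: either it contains the x-variable with the given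
index, with semantics M → (values of ȳ) → Prop, or it contains no x-variable. -/
def StrictLit (k : ℕ) (M : Type*) : Type _ :=
  (Fin k × (M → List M → Prop)) ⊕ (List M → Prop)

/-- Truth of a literal under an assignment v to the x-variables and values bs for
the remaining variables. -/
def litSat {k : ℕ} {M : Type*} (lit : StrictLit k M) (v : Fin k → M)
    (bs : List M) : Prop :=
  Sum.elim (fun p => p.2 (v p.1) bs) (fun Q => Q bs) lit

/-- Satisfaction, by the assignment S over the propositional variables X_{i,a},
of the propositional formula ξ^∨(A,λ,b̄) = ⋁_{a : A ⊨ λ(a,b̄)} X_{i,a} (resp. of the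
constant corresponding to the truth value of λ(b̄) if λ contains no x-variable). -/
def xiSat {k : ℕ} {M : Type*} [DecidableEq M] (lit : StrictLit k M)
    (S : Finset (Fin k × M)) (bs : List M) : Prop :=
  Sum.elim (fun p => ∃ a : M, p.2 a bs ∧ (p.1, a) ∈ S) (fun Q => Q bs) lit


private theorem altq_congr {M : Type*} : ∀ (n : ℕ) (b : Bool) (P Q : List M → Prop),
    (∀ l, P l ↔ Q l) → (AltQ M n b P ↔ AltQ M n b Q)
  | 0, _, P, Q, h => h []
  | n + 1, true, P, Q, h => by
      simp only [AltQ]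
      exact forall_congr' fun a => altq_congr n false _ _ (fun l => h (a :: l))
  | n + 1, false, P, Q, h => by
      simp only [AltQ]
      exact exists_congr fun a => altq_congr n true _ _ (fun l => h (a :: l))

/-- For a finite structure A and a strict Σ_{t,1}-sentence
φ = ∃x₁…x_k ∀y₁∃y₂…∀y_{t−1} ⋀_i ⋁_j λ_{ij} (t even, each literal containing at
most one x-variable): A ⊨ φ if and only if the propositional formula
α = χ⁺ ∧ ⋀_{b₁}⋁_{b₂}…⋀_{b_{t−1}} ⋀_i ⋁_j ξ^∨(A,λ_{ij},b̄) over the variables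
X_{i,a} is k-satisfiable. -/
theorem strict_sigma_t1_to_weighted_sat (M : Type*) [Fintype M] [Nonempty M]
    [DecidableEq M] (t k : ℕ) (ht : 2 ≤ t) (hev : Even t)
    (I : Type*) (J : I → Type*) [Finite I] [∀ i, Finite (J i)]
    (lam : ∀ i : I, J i → StrictLit k M) :
    (∃ v : Fin k → M, AltQ M (t - 1) true
        (fun bs => ∀ i : I, ∃ j : J i, litSat (lam i j) v bs)) ↔
      (∃ S : Finset (Fin k × M), S.card = k ∧
        (∀ i : Fin k, ∃ a : M, (i, a) ∈ S) ∧
        AltQ M (t - 1) true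
          (fun bs => ∀ i : I, ∃ j : J i, xiSat (lam i j) S bs)) := by
  constructor
  · rintro ⟨v, h⟩
    refine ⟨Finset.univ.image (fun i => (i, v i)), ?_, ?_, ?_⟩
    · rw [Finset.card_image_of_injective _ (fun i j hij => (Prod.mk.injEq _ _ _ _ ▸ hij).1)]
      simp
    · intro i; exact ⟨v i, Finset.mem_image_of_mem _ (Finset.mem_univ i)⟩
    · refine (altq_congr _ _ _ _ fun bs => ?_).mp h
      refine forall_congr' fun i => exists_congr fun j => ?_
      cases hl : lam i j with
      | inl p =>
        simp only [litSat, xiSat, hl, Sum.elim_inl, Finset.mem_image]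
        constructor
        · intro hp; exact ⟨v p.1, hp, p.1, Finset.mem_univ _, rfl⟩
        · rintro ⟨a, ha, i', -, hi'⟩
          obtain ⟨h1, h2⟩ := Prod.mk.injEq _ _ _ _ ▸ hi'
          subst h1; subst h2; exact ha
      | inr Q => simp [litSat, xiSat, hl]
  · rintro ⟨S, hcard, hcov, h⟩
    choose v hv using hcov
    have hinj : Function.Injective (fun i => (i, v i) : Fin k → Fin k × M) :=
      fun i j hij => (Prod.mk.injEq _ _ _ _ ▸ hij).1
    have hsub : Finset.univ.image (fun i => (i, v i)) ⊆ S := by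
      intro p hp
      simp only [Finset.mem_image, Finset.mem_univ, true_and] at hp
      obtain ⟨i, hi⟩ := hp; exact hi ▸ hv i
    have heq : Finset.univ.image (fun i => (i, v i)) = S := by
      apply Finset.eq_of_subset_of_card_le hsub
      rw [Finset.card_image_of_injective _ hinj, hcard]; simp
    have hmem : ∀ i a, (i, a) ∈ S → a = v i := by
      intro i a ha
      rw [← heq] at ha
      simp only [Finset.mem_image, Finset.mem_univ, true_and] at ha
      obtain ⟨i', hi'⟩ := ha
      obtain ⟨h1, h2⟩ := Prod.mk.injEq _ _ _ _ ▸ hi'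
      subst h1; exact h2.symm
    refine ⟨v, (altq_congr _ _ _ _ fun bs => ?_).mpr h⟩
    refine forall_congr' fun i => exists_congr fun j => ?_
    cases hl : lam i j with
    | inl p =>
      simp only [litSat, xiSat, hl, Sum.elim_inl]
      constructor
      · intro hp; exact ⟨v p.1, hp, hv p.1⟩
      · rintro ⟨a, ha, haS⟩; rw [hmem _ _ haS] at ha; exact ha
    | inr Q => simp [litSat, xiSat, hl]
end

section
/- For every sentence φ = ∃x₁…∃x_k ∀ȳ ∃z̄ ψ with quantifier-free ψ and |ȳ| = |z̄| = u over vocabulary τ, and every τ-structure A, define A' with universe A ∪ A^u, a unary predicate T interpreted as A^u, and for each atomic subformula λ of ψ a relation R_λ ⊆ A × A^u × A^u defined by R_λ(a, b̄, c̄) iff A ⊨ λ under the substitution taking λ's x-variable to a and its y- and z-variables to the corresponding components of b̄ and c̄. Let φ' := ∃x₁…∃x_k ∀y ∃z (⋀_i ¬Tx_i ∧ (Ty → (Tz ∧ ψ'))), where ψ' replaces each atom λ by R_λ x_{i(λ)} y z. Then A ⊨ φ iff A' ⊨ φ'. -/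
/-- Collapsing the bounded quantifier blocks of a strict Σ_{3,u}-sentence
φ = ∃x₁…x_k ∀ȳ ∃z̄ ψ (|ȳ| = |z̄| = u, each atom containing at most one x-variable)
to single quantifiers. Atoms are indexed by ι; the atom j mentions the x-variable
x_{idx j} and its semantics is P j : M → A^u → A^u → Prop; ψ is an arbitrary Boolean
combination B of the atoms. The new structure A' has universe M ⊕ (Fin u → M), the
unary predicate T holds of the new elements (the u-tuples), and R_λ(a,b̄,c̄) holds
iff the atom λ is true when its x-variable is a and its y- and z-variables are the
corresponding components of b̄, c̄. Then A ⊨ φ iff A' ⊨ φ', where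
φ' = ∃x₁…x_k ∀y ∃z (⋀ᵢ ¬Txᵢ ∧ (Ty → (Tz ∧ ψ'))) with ψ' the result of replacing
each atom λ by R_λ x_{idx λ} y z. -/
theorem strict_sigma3_tuple_collapse (M : Type*) [Finite M] [Nonempty M]
    (k u : ℕ) (ι : Type*) (idx : ι → Fin k)
    (P : ι → M → (Fin u → M) → (Fin u → M) → Prop)
    (B : (ι → Prop) → Prop) :
    (∃ v : Fin k → M, ∀ y : Fin u → M, ∃ z : Fin u → M,
        B (fun j => P j (v (idx j)) y z)) ↔
      (∃ v' : Fin k → M ⊕ (Fin u → M), ∀ y' : M ⊕ (Fin u → M),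
        ∃ z' : M ⊕ (Fin u → M),
          (∀ i : Fin k, ¬ ∃ b : Fin u → M, v' i = Sum.inr b) ∧
          ((∃ b : Fin u → M, y' = Sum.inr b) →
            ((∃ c : Fin u → M, z' = Sum.inr c) ∧
              B (fun j => ∃ (a : M) (b c : Fin u → M),
                v' (idx j) = Sum.inl a ∧ y' = Sum.inr b ∧ z' = Sum.inr c ∧
                P j a b c)))) := by
  constructor
  · rintro ⟨v, hv⟩
    refine ⟨fun i => Sum.inl (v i), fun y' => ?_⟩
    match y' with
    | Sum.inl a =>
        exact ⟨Sum.inl a, fun i ⟨b, hb⟩ => by simp at hb,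
          fun ⟨b, hb⟩ => by simp at hb⟩
    | Sum.inr b =>
        obtain ⟨z, hz⟩ := hv b
        refine ⟨Sum.inr z, fun i ⟨c, hc⟩ => by simp at hc,
          fun _ => ⟨⟨z, rfl⟩, ?_⟩⟩
        have heq : (fun j => ∃ (a : M) (b' c : Fin u → M),
            (fun i => (Sum.inl (v i) : M ⊕ (Fin u → M))) (idx j) = Sum.inl a ∧
            (Sum.inr b : M ⊕ (Fin u → M)) = Sum.inr b' ∧
            (Sum.inr z : M ⊕ (Fin u → M)) = Sum.inr c ∧ P j a b' c)
            = (fun j => P j (v (idx j)) b z) := by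
          funext j
          apply propext
          constructor
          · rintro ⟨a, b', c, ha, hb, hc, hp⟩
            cases Sum.inl.injEq .. ▸ ha
            cases Sum.inr.inj hb
            cases Sum.inr.inj hc
            exact hp
          · intro hp; exact ⟨_, _, _, rfl, rfl, rfl, hp⟩
        rw [heq]
        exact hz
  · rintro ⟨v', hv'⟩
    have hinl : ∀ i, ∃ a : M, v' i = Sum.inl a := by
      intro i
      obtain ⟨_, h1, _⟩ := hv' (Sum.inl Classical.ofNonempty)
      cases h : v' i with
      | inl a => exact ⟨a, rfl⟩
      | inr b => exact absurd ⟨b, h⟩ (h1 i)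
    choose v hv using hinl
    refine ⟨v, fun y => ?_⟩
    obtain ⟨z', _, h2⟩ := hv' (Sum.inr y)
    obtain ⟨⟨c, hc⟩, hB⟩ := h2 ⟨y, rfl⟩
    refine ⟨c, ?_⟩
    have heq : (fun j => ∃ (a : M) (b c' : Fin u → M),
        v' (idx j) = Sum.inl a ∧ (Sum.inr y : M ⊕ (Fin u → M)) = Sum.inr b ∧
        z' = Sum.inr c' ∧ P j a b c') = (fun j => P j (v (idx j)) y c) := by
      funext j
      apply propext
      subst hc
      constructor
      · rintro ⟨a, b, c', ha, hb, hcc, hp⟩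
        rw [hv (idx j)] at ha
        cases Sum.inl.inj ha
        cases Sum.inr.inj hb
        cases Sum.inr.inj hcc
        exact hp
      · intro hp; exact ⟨_, _, _, hv (idx j), rfl, rfl, hp⟩
    rw [heq] at hB
    exact hB
end
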